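/- For g = (√5−1)/2 < α ≤ 1, let K be defined by 2K+1 = d_α(φ_α(α)) where φ_α(α) = 1/α − 1 (assume φ_α(α) > 0), and let L be defined by 2L+1 = d_α(|φ_α(α−2)|) where φ_α(α−2) = 1/(2−α) − 1. Then L = K + 1; equivalently d_α(φ_α(α)) = d_α(−φ_α(α−2)) − 2. -/

import Mathlib

/-
With `x = 1/α - 1 = (1 - α)/α` and `y = 1 - 1/(2 - α) = (1 - α)/(2 - α)` one has
`1/(2y) = (2 - α)/(2(1 - α)) = α/(2(1 - α)) + 1 = 1/(2x) + 1`, so the floor in the digit of `y`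
is one more than that in the digit of `x`, and the odd digits differ by 2.
-/

/-- The digit function of the α-OCF Gauss map. -/
noncomputable def dA (α x : ℝ) : ℤ := 2 * ⌊1/(2*|x|) + (1-α)/2⌋ + 1

lemma dA_eq_add_two_of_one_div_two_mul_abs_eq_add_one {α x y : ℝ}
    (h : 1 / (2 * |y|) = 1 / (2 * |x|) + 1) : dA α y = dA α x + 2 := by
  unfold dA
  rw [h, add_right_comm, Int.floor_add_one]
  ring

lemma pos_and_lt_one_of_one_div_sub_one_pos {α : ℝ} (h : 0 < 1 / α - 1) : 0 < α ∧ α < 1 := by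
  have hα : 0 < α := by
    by_contra! hα
    have : 1 / α ≤ 0 := one_div_nonpos.mpr hα
    linarith
  refine ⟨hα, ?_⟩
  have : 1 < 1 / α := by linarith
  rwa [lt_one_div one_pos hα, div_one] at this

lemma one_div_two_mul_abs_one_div_two_sub_sub_one {α : ℝ} (hα₀ : 0 < α) (hα₁ : α < 1) :
    1 / (2 * |-(1 / (2 - α) - 1)|) = 1 / (2 * |1 / α - 1|) + 1 := by
  have hx : 1 / α - 1 = (1 - α) / α := by field_simp
  have hy : -(1 / (2 - α) - 1) = (1 - α) / (2 - α) := by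
    field_simp [show (2 : ℝ) - α ≠ 0 by linarith]
    ring
  have h1α : 0 < 1 - α := by linarith
  rw [hx, hy, abs_of_pos (div_pos h1α hα₀), abs_of_pos (div_pos h1α (by linarith))]
  field_simp
  ring

theorem stmt5 (α : ℝ)
    (hpos : 0 < 1/α - 1) :
    dA α (1/α - 1) = dA α (-(1/(2-α) - 1)) - 2 := by
  obtain ⟨hα₀, hα₁⟩ := pos_and_lt_one_of_one_div_sub_one_pos hpos
  rw [dA_eq_add_two_of_one_div_two_mul_abs_eq_add_one
    (one_div_two_mul_abs_one_div_two_sub_sub_one hα₀ hα₁)]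
  ring
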